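/- arXiv:2603.03104 — 9 statements merged into one kernel-verified Lean document; each statement's English description precedes it below -/
import Mathlib

section
/- Let a,b,c ≥ 2 be positive integers with gcd(a,b,c)=1. If gcd(b,c)=d and b=d·b', c=d·c', then g(a,b,c) = d·g(a,b',c') + a(d-1), where g denotes the Frobenius number. -/
/-!
A representation `a * x + d * (b * y + c * z)` of `n` pins down `x` modulo `d`, since `a` is a
unit mod `d`. So `n` is representable by `a, d * b, d * c` exactly when, for the residue
`x₀ ∈ [0, d)` with `a * x₀ ≡ n [MOD d]`, we have `a * x₀ ≤ n` and `(n - a * x₀) / d` is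
representable by `a, b, c`. The worst residue is `x₀ = d - 1`, whence the largest gap
`d * g' + a * (d - 1)`.
-/

def Representable (a b c n : ℕ) : Prop :=
  ∃ x y z : ℕ, n = a * x + b * y + c * z

section

variable {a b c d m n : ℕ}

theorem Representable.mul_add (h : Representable a b c m) (x : ℕ) :
    Representable a (d * b) (d * c) (a * x + d * m) := by
  obtain ⟨p, y, z, rfl⟩ := h
  exact ⟨x + d * p, y, z, by ring⟩

theorem Nat.exists_lt_mul_modEq_of_coprime (hcop : Nat.Coprime a d) (hd : 0 < d) (n : ℕ) :
    ∃ x < d, a * x ≡ n [MOD d] := by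
  have : NeZero d := ⟨hd.ne'⟩
  refine ⟨((a : ZMod d)⁻¹ * n).val, ZMod.val_lt _, ?_⟩
  rw [← ZMod.natCast_eq_natCast_iff]
  push_cast [ZMod.natCast_zmod_val]
  rw [← mul_assoc, ZMod.coe_mul_inv_eq_one a hcop, one_mul]

theorem not_representable_mul_add_mul_pred (hcop : Nat.Coprime a d) (hd : 0 < d)
    (hm : ¬ Representable a b c m) :
    ¬ Representable a (d * b) (d * c) (d * m + a * (d - 1)) := by
  rintro ⟨x, y, z, hxyz⟩
  have hmod : a * x ≡ a * (d - 1) [MOD d] := by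
    calc a * x ≡ a * x + d * (b * y + c * z) [MOD d] := (Nat.add_mul_mod_self_left _ _ _).symm
      _ = d * m + a * (d - 1) := by rw [hxyz]; ring
      _ ≡ a * (d - 1) [MOD d] := Nat.mul_add_mod_self_left _ _ _
  have hx : x % d = d - 1 := by
    have := Nat.ModEq.cancel_left_of_coprime (Nat.coprime_comm.mp hcop) hmod
    rwa [Nat.ModEq, Nat.mod_eq_of_lt (by omega : d - 1 < d)] at this
  have hsplit : x = d * (x / d) + (d - 1) := by rw [← hx, Nat.div_add_mod]
  refine hm ⟨x / d, y, z, Nat.eq_of_mul_eq_mul_left hd ?_⟩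
  rw [hsplit] at hxyz
  linarith

theorem representable_of_mul_add_mul_pred_lt (hcop : Nat.Coprime a d) (hd : 0 < d) {g : ℕ}
    (hg : ∀ m, g < m → Representable a b c m) (hn : d * g + a * (d - 1) < n) :
    Representable a (d * b) (d * c) n := by
  obtain ⟨x, hxd, hx⟩ := Nat.exists_lt_mul_modEq_of_coprime hcop hd n
  have hax : a * x ≤ a * (d - 1) := Nat.mul_le_mul_left a (by omega)
  obtain ⟨m, hm⟩ := (Nat.modEq_iff_dvd' (by omega)).mp hx
  have hgm : g < m := Nat.lt_of_mul_lt_mul_left (a := d) (by omega)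
  rw [show n = a * x + d * m by omega]
  exact (hg m hgm).mul_add x

end

theorem johnson_formula_general (a b c d b' c' g g' : ℕ)
    (hb : 2 ≤ b)
    (hgcd : Nat.gcd a (Nat.gcd b c) = 1)
    (hd : Nat.gcd b c = d) (hb' : b = d * b') (hc' : c = d * c')
    (hg : IsGreatest {n : ℕ | 0 < n ∧ ¬ ∃ x y z : ℕ, n = a * x + b * y + c * z} g)
    (hg' : IsGreatest {n : ℕ | 0 < n ∧ ¬ ∃ x y z : ℕ, n = a * x + b' * y + c' * z} g') :
    g = d * g' + a * (d - 1) := by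
  have hd0 : 0 < d := hd ▸ Nat.gcd_pos_of_pos_left c (by omega)
  have hcop : Nat.Coprime a d := hd ▸ hgcd
  have hg'_lt : ∀ m, g' < m → Representable a b' c' m := fun m hm =>
    by_contra fun h => absurd (hg'.2 ⟨by omega, h⟩) (by omega)
  subst hb' hc'
  refine hg.unique ⟨⟨?_, not_representable_mul_add_mul_pred hcop hd0 hg'.1.2⟩, ?_⟩
  · have := Nat.mul_pos hd0 hg'.1.1
    omega
  · rintro n ⟨-, hn⟩
    by_contra! hlt
    exact hn (representable_of_mul_add_mul_pred_lt hcop hd0 hg'_lt hlt)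

/-- Johnson's formula: if `gcd(b,c) = d`, `b = d*b'`, `c = d*c'`, then
`g(a,b,c) = d * g(a,b',c') + a*(d-1)`. -/
theorem johnson_formula (a b c d b' c' g g' : ℕ)
    (ha : 2 ≤ a) (hb : 2 ≤ b) (hc : 2 ≤ c)
    (hgcd : Nat.gcd a (Nat.gcd b c) = 1)
    (hd : Nat.gcd b c = d) (hb' : b = d * b') (hc' : c = d * c')
    (hg : IsGreatest {n : ℕ | 0 < n ∧ ¬ ∃ x y z : ℕ, n = a * x + b * y + c * z} g)
    (hg' : IsGreatest {n : ℕ | 0 < n ∧ ¬ ∃ x y z : ℕ, n = a * x + b' * y + c' * z} g') :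
    g = d * g' + a * (d - 1) :=
  johnson_formula_general a b c d b' c' g g' hb hgcd hd hb' hc' hg hg'
end

section
/- Let c > b > a ≥ 2 be pairwise coprime, ℓ = c·b⁻¹ mod a, k = ⌊c/b⌋, q = ⌊a/(a-ℓ)⌋, r = a - q(a-ℓ). If ℓ > k and br < cq, then r < ℓ. -/
/-- If `ℓ > k` and `b*r < c*q`, then `r < ℓ`. -/
theorem r_lt_ell (a b c ℓ q r : ℕ)
    (ha : 2 ≤ a) (hab : a < b) (hbc : b < c)
    (cab : Nat.Coprime a b) (cac : Nat.Coprime a c) (cbc : Nat.Coprime b c)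
    (hℓa : ℓ < a) (hℓ : b * ℓ % a = c % a)
    (hk : c / b < ℓ)
    (hq : q = a / (a - ℓ)) (hr : r = a - q * (a - ℓ))
    (hbr : b * r < c * q) :
    r < ℓ := by
  have hc : c < b * ℓ := by
    rw [mul_comm]
    exact (Nat.div_lt_iff_lt_mul (by omega : 0 < b)).mp hk
  rcases le_or_gt (a - ℓ) ℓ with h | h
  · have h2 : a % (a - ℓ) < a - ℓ := Nat.mod_lt _ (by omega)
    have h3 := Nat.div_add_mod a (a - ℓ)
    have h4 : r = a % (a - ℓ) := by rw [hr, hq, Nat.mul_comm]; omega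
    omega
  · have hq1 : q = 1 := by
      rw [hq]
      apply Nat.div_eq_of_lt_le <;> omega
    have hrℓ : r = ℓ := by rw [hq1, one_mul] at hr; omega
    rw [hrℓ, hq1] at hbr
    omega
end

section
/- Let c > b > a ≥ 2 be pairwise coprime, ℓ = c·b⁻¹ mod a with ℓ > ⌊c/b⌋, q = ⌊a/(a-ℓ)⌋, r = a - q(a-ℓ). If br < cq, then a - ℓ ≤ ℓ (equivalently 2ℓ ≥ a). -/
/-- If `ℓ > k` and `b*r < c*q`, then `a - ℓ ≤ ℓ`. -/
theorem a_sub_ell_le_ell (a b c ℓ q r : ℕ)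
    (ha : 2 ≤ a) (hab : a < b) (hbc : b < c)
    (cab : Nat.Coprime a b) (cac : Nat.Coprime a c) (cbc : Nat.Coprime b c)
    (hℓa : ℓ < a) (hℓ : b * ℓ % a = c % a)
    (hk : c / b < ℓ)
    (hq : q = a / (a - ℓ)) (hr : r = a - q * (a - ℓ))
    (hbr : b * r < c * q) :
    a - ℓ ≤ ℓ := by
  by_contra h
  push_neg at h
  have hq1 : q = 1 := by
    rw [hq]
    apply Nat.div_eq_of_lt_le <;> omega
  subst hq1
  have hr1 : r = ℓ := by omega
  have hc : c < b * ℓ := by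
    rw [mul_comm]
    exact (Nat.div_lt_iff_lt_mul (show 0 < b by omega)).mp hk
  subst hr1
  omega
end

section
/- Let c > b > a ≥ 2 be pairwise coprime, ℓ = c·b⁻¹ mod a with ℓ > ⌊c/b⌋, q = ⌊a/(a-ℓ)⌋, r = a - q(a-ℓ). If br > cq, then m(br) = cq, where m(br) is the least nonnegative-integer combination b·n₁ + c·n₂ congruent to br modulo a. -/
/-- If `ℓ > k` and `b*r > c*q`, then `m(br) = cq`. -/
theorem m_br_eq_cq (a b c ℓ q r : ℕ)
    (ha : 2 ≤ a) (hab : a < b) (hbc : b < c)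
    (cab : Nat.Coprime a b) (cac : Nat.Coprime a c) (cbc : Nat.Coprime b c)
    (hℓa : ℓ < a) (hℓ : b * ℓ % a = c % a)
    (hk : c / b < ℓ)
    (hq : q = a / (a - ℓ)) (hr : r = a - q * (a - ℓ))
    (hbr : c * q < b * r) :
    sInf {z : ℕ | 0 < z ∧ (∃ n₁ n₂ : ℕ, z = b * n₁ + c * n₂) ∧ z % a = (b * r) % a}
      = c * q := by
  have h1 : ℓ ≤ a := hℓa.le
  have haℓ : 0 < a - ℓ := by omega
  have hq1 : 1 ≤ q := by
    rw [hq]; exact (Nat.one_le_div_iff haℓ).mpr (by omega)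
  have hqle : q * (a - ℓ) ≤ a := by
    rw [hq]; exact Nat.div_mul_le_self a (a - ℓ)
  have hr0 : 0 < r := by
    rcases Nat.eq_zero_or_pos r with h | h
    · subst h; simp at hbr
    · exact h
  have hcℓ : ((b : ZMod a)) * (ℓ : ZMod a) = (c : ZMod a) := by
    have := (ZMod.natCast_eq_natCast_iff (b * ℓ) c a).mpr hℓ
    push_cast at this; exact this
  have hsub : ((a - ℓ : ℕ) : ZMod a) = -(ℓ : ZMod a) := by
    rw [Nat.cast_sub h1, ZMod.natCast_self, zero_sub]
  have key : ∀ t : ℕ, t * (a - ℓ) ≤ a →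
      (((a - t * (a - ℓ) : ℕ)) : ZMod a) = (t : ZMod a) * (ℓ : ZMod a) := by
    intro t ht
    have h2 : (a - t * (a - ℓ)) + t * (a - ℓ) = a := by omega
    have h3 := congrArg (Nat.cast : ℕ → ZMod a) h2
    push_cast at h3
    rw [hsub, ZMod.natCast_self] at h3
    linear_combination h3
  have hrz : ((r : ℕ) : ZMod a) = (q : ZMod a) * (ℓ : ZMod a) := by
    rw [hr]; exact key q hqle
  have hmod : ((c * q : ℕ) : ZMod a) = ((b * r : ℕ) : ZMod a) := by
    push_cast
    rw [hrz, ← hcℓ]; ring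
  have hc0 : 0 < c := by omega
  have hmem : c * q ∈
      {z : ℕ | 0 < z ∧ (∃ n₁ n₂ : ℕ, z = b * n₁ + c * n₂) ∧ z % a = (b * r) % a} := by
    refine ⟨Nat.mul_pos hc0 hq1, ⟨0, q, by ring⟩, ?_⟩
    exact (ZMod.natCast_eq_natCast_iff _ _ _).mp hmod
  have hlb : ∀ z ∈
      {z : ℕ | 0 < z ∧ (∃ n₁ n₂ : ℕ, z = b * n₁ + c * n₂) ∧ z % a = (b * r) % a},
      c * q ≤ z := by
    rintro z ⟨hz0, ⟨n₁, n₂, hzeq⟩, hzmod⟩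
    by_cases hn2 : q ≤ n₂
    · calc c * q ≤ c * n₂ := Nat.mul_le_mul_left c hn2
        _ ≤ b * n₁ + c * n₂ := Nat.le_add_left _ _
        _ = z := hzeq.symm
    · push_neg at hn2
      set t : ℕ := q - n₂ with hto
      have ht1 : 1 ≤ t := by omega
      have htq : t ≤ q := by omega
      have htle : t * (a - ℓ) ≤ a := le_trans (Nat.mul_le_mul_right _ htq) hqle
      set rt : ℕ := a - t * (a - ℓ) with hrt
      have hrtz : ((rt : ℕ) : ZMod a) = (t : ZMod a) * (ℓ : ZMod a) := key t htle
      -- congruence : z ≡ b*r ≡ c*q (mod a)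
      have hz1 : ((z : ℕ) : ZMod a) = ((c * q : ℕ) : ZMod a) := by
        rw [hmod]
        exact (ZMod.natCast_eq_natCast_iff _ _ _).mpr hzmod
      have hz2 : ((b * n₁ : ℕ) : ZMod a) = ((b * rt : ℕ) : ZMod a) := by
        have hq2 : (q : ℕ) = n₂ + t := by omega
        have := hz1
        rw [hzeq] at this
        push_cast [hq2] at this ⊢
        rw [hrtz]
        linear_combination this - (t : ZMod a) * hcℓ
      have hcan : n₁ ≡ rt [MOD a] :=
        ((ZMod.natCast_eq_natCast_iff _ _ _).mp hz2).cancel_left_of_coprime cab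
      have hrtlt : rt < a := by
        have : 1 ≤ t * (a - ℓ) := Nat.one_le_iff_ne_zero.mpr (by positivity)
        omega
      have hn₁ : rt ≤ n₁ := by
        have h4 : n₁ % a = rt % a := hcan
        have h5 : rt % a = rt := Nat.mod_eq_of_lt hrtlt
        have h6 : n₁ % a ≤ n₁ := Nat.mod_le _ _
        omega
      have hrrt : r ≤ rt := by
        have : t * (a - ℓ) ≤ q * (a - ℓ) := Nat.mul_le_mul_right _ htq
        omega
      calc c * q ≤ b * r := hbr.le
        _ ≤ b * n₁ := Nat.mul_le_mul_left b (le_trans hrrt hn₁)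
        _ ≤ b * n₁ + c * n₂ := Nat.le_add_right _ _
        _ = z := hzeq.symm
  exact le_antisymm (Nat.sInf_le hmem) (le_csInf ⟨_, hmem⟩ hlb)
end

section
/- Let c > b > a ≥ 2 be pairwise coprime, ℓ = c·b⁻¹ mod a, k = ⌊c/b⌋. If ℓ ≤ k, then g(a,b,c) = g(a,b) = ab - a - b. -/
/-- If `ℓ ≤ k`, then `g(a,b,c) = g(a,b) = ab - a - b`. -/
theorem ell_le_k_frobenius (a b c ℓ : ℕ)
    (ha : 2 ≤ a) (hab : a < b) (hbc : b < c)
    (cab : Nat.Coprime a b) (cac : Nat.Coprime a c) (cbc : Nat.Coprime b c)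
    (hℓa : ℓ < a) (hℓ : b * ℓ % a = c % a)
    (hk : ℓ ≤ c / b) :
    IsGreatest {n : ℕ | 0 < n ∧ ¬ ∃ x y z : ℕ, n = a * x + b * y + c * z} (a * b - a - b)
    ∧ IsGreatest {n : ℕ | 0 < n ∧ ¬ ∃ x y : ℕ, n = a * x + b * y} (a * b - a - b) := by
  have hpos : 0 < a * b - a - b := by
    have h : a + b + 1 ≤ a * b := by nlinarith
    omega
  have hF := frobeniusNumber_pair cab (by omega) (by omega)
  simp_rw [FrobeniusNumber, AddSubmonoid.mem_closure_pair, smul_eq_mul] at hF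
  have hrep : ∀ n : ℕ, (∃ x y : ℕ, n = a * x + b * y) ↔ ∃ x y : ℕ, x * a + y * b = n := by
    intro n
    constructor
    · rintro ⟨x, y, rfl⟩; exact ⟨x, y, by ring⟩
    · rintro ⟨x, y, rfl⟩; exact ⟨x, y, by ring⟩
  have G2 : IsGreatest {n : ℕ | 0 < n ∧ ¬ ∃ x y : ℕ, n = a * x + b * y} (a * b - a - b) := by
    constructor
    · exact ⟨hpos, fun h => hF.1 ((hrep _).mp h)⟩
    · intro n hn
      exact hF.2 fun h => hn.2 ((hrep n).mpr h)
  have hbl : b * ℓ ≤ c := by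
    have h1 : b * ℓ ≤ b * (c / b) := Nat.mul_le_mul_left b hk
    have h2 : b * (c / b) ≤ c := by
      rw [mul_comm]; exact Nat.div_mul_le_self c b
    exact le_trans h1 h2
  obtain ⟨x₀, hx₀⟩ := (Nat.modEq_iff_dvd' hbl).mp hℓ
  have hc : c = a * x₀ + b * ℓ := (Nat.sub_eq_iff_eq_add hbl).mp hx₀
  refine ⟨⟨⟨hpos, ?_⟩, ?_⟩, G2⟩
  · rintro ⟨x, y, z, hxyz⟩
    exact G2.1.2 ⟨x + x₀ * z, y + ℓ * z, by rw [hxyz, hc]; ring⟩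
  · rintro n ⟨hn1, hn2⟩
    exact G2.2 ⟨hn1, fun ⟨x, y, h⟩ => hn2 ⟨x, y, 0, by omega⟩⟩
end

section
/- Let c > b > a ≥ 2 be pairwise coprime, ℓ = c·b⁻¹ mod a with ℓ > ⌊c/b⌋. Then g(a,b,c) = max over x in {1,...,a-1} of ( min over t in {0,...,a-1} of b·((x + (a-ℓ)t) mod a) + c·t ) minus a. -/
/-!
For each residue `x` the inner minimum is the least element of the semigroup `⟨b, c⟩` lying in
the class of `b * x` modulo `a` (an element of the Apéry set of `a`): a combination `b * y + c * z`
in that class can be reduced to `z < a`, `y < a`, and then `b * ℓ ≡ c` forces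
`y ≡ x + (a - ℓ) z`. Hence `n ≡ b * x` is representable by `a, b, c` exactly when it is at least
that minimum, so the largest non-representable number in that class is the minimum minus `a`;
the class `x = 0` contains no non-representable number.
-/

section

variable {a b c ℓ : ℕ}

theorem mul_mod_add_mul_modEq (hℓa : ℓ ≤ a) (hℓ : b * ℓ ≡ c [MOD a]) (x t : ℕ) :
    b * ((x + (a - ℓ) * t) % a) + c * t ≡ b * x [MOD a] := by
  rw [← ZMod.natCast_eq_natCast_iff] at hℓ ⊢
  push_cast [ZMod.natCast_mod, Nat.cast_sub hℓa, ZMod.natCast_self] at hℓ ⊢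
  linear_combination -t * hℓ

def residueMin (a b c ℓ : ℕ) (ha : a ≠ 0) (x : ℕ) : ℕ :=
  (Finset.range a).inf' (Finset.nonempty_range_iff.mpr ha)
    fun t => b * ((x + (a - ℓ) * t) % a) + c * t

theorem exists_residueMin_eq (ha : a ≠ 0) (x : ℕ) :
    ∃ t, residueMin a b c ℓ ha x = b * ((x + (a - ℓ) * t) % a) + c * t := by
  obtain ⟨t, -, ht⟩ := Finset.exists_mem_eq_inf' (Finset.nonempty_range_iff.mpr ha)
    fun t => b * ((x + (a - ℓ) * t) % a) + c * t
  exact ⟨t, ht⟩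

theorem residueMin_modEq (ha : a ≠ 0) (hℓa : ℓ ≤ a) (hℓ : b * ℓ ≡ c [MOD a]) (x : ℕ) :
    residueMin a b c ℓ ha x ≡ b * x [MOD a] := by
  obtain ⟨t, ht⟩ := exists_residueMin_eq (b := b) (c := c) (ℓ := ℓ) ha x
  exact ht ▸ mul_mod_add_mul_modEq hℓa hℓ x t

theorem residueMin_le (ha : a ≠ 0) (cab : a.Coprime b) (hℓa : ℓ ≤ a) (hℓ : b * ℓ ≡ c [MOD a])
    {x y z : ℕ} (h : b * y + c * z ≡ b * x [MOD a]) :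
    residueMin a b c ℓ ha x ≤ b * y + c * z := by
  have hlt : ∀ n, n % a < a := fun n => Nat.mod_lt n (Nat.pos_of_ne_zero ha)
  have hcongr : b * (y % a) + c * (z % a) ≡ b * ((x + (a - ℓ) * (z % a)) % a) + c * (z % a)
      [MOD a] :=
    ((((Nat.mod_modEq y a).mul_left b).add ((Nat.mod_modEq z a).mul_left c)).trans h).trans
      (mul_mod_add_mul_modEq hℓa hℓ x _).symm
  have hy : y % a = (x + (a - ℓ) * (z % a)) % a :=
    Nat.ModEq.eq_of_lt_of_lt (Nat.ModEq.cancel_left_of_coprime cab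
      (Nat.ModEq.add_right_cancel' _ hcongr)) (hlt _) (hlt _)
  calc residueMin a b c ℓ ha x ≤ b * (y % a) + c * (z % a) :=
        hy ▸ Finset.inf'_le _ (Finset.mem_range.mpr (hlt z))
    _ ≤ b * y + c * z := by gcongr <;> exact Nat.mod_le _ _

theorem representable_iff_residueMin_le (ha : a ≠ 0) (cab : a.Coprime b) (hℓa : ℓ ≤ a)
    (hℓ : b * ℓ ≡ c [MOD a]) {n x : ℕ} (hn : n ≡ b * x [MOD a]) :
    (∃ u y z, n = a * u + b * y + c * z) ↔ residueMin a b c ℓ ha x ≤ n := by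
  constructor
  · rintro ⟨u, y, z, rfl⟩
    have h : b * y + c * z ≡ b * x [MOD a] :=
      .trans (by rw [add_assoc]; exact (Nat.mul_add_mod_self_left a u _).symm) hn
    have := residueMin_le ha cab hℓa hℓ h
    omega
  · intro hle
    obtain ⟨t, ht⟩ := exists_residueMin_eq (b := b) (c := c) (ℓ := ℓ) ha x
    obtain ⟨u, hu⟩ := (Nat.modEq_iff_dvd' hle).mp ((residueMin_modEq ha hℓa hℓ x).trans hn.symm)
    exact ⟨u, (x + (a - ℓ) * t) % a, t, by omega⟩

theorem lt_residueMin (ha : a ≠ 0) (hab : a < b) (hbc : b < c) (cab : a.Coprime b)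
    (hℓa : ℓ ≤ a) (hℓ : b * ℓ ≡ c [MOD a]) {x : ℕ} (hx : ¬ a ∣ x) :
    a < residueMin a b c ℓ ha x := by
  have hne : residueMin a b c ℓ ha x ≠ 0 := fun h0 => hx <| cab.dvd_of_dvd_mul_left <|
    Nat.modEq_zero_iff_dvd.mp (h0 ▸ residueMin_modEq ha hℓa hℓ x).symm
  obtain ⟨t, ht⟩ := exists_residueMin_eq (b := b) (c := c) (ℓ := ℓ) ha x
  rw [ht] at hne ⊢
  generalize (x + (a - ℓ) * t) % a = y at hne ⊢
  rcases Nat.eq_zero_or_pos y with rfl | hy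
  · have ht : 0 < t := Nat.pos_of_ne_zero (by rintro rfl; simp at hne)
    nlinarith
  · nlinarith

end

/-- If `ℓ > k`, then
`g(a,b,c) + a = max_{1 ≤ x < a} min_{0 ≤ t < a} ( b*((x + (a-ℓ)t) mod a) + c*t )`. -/
theorem frobenius_minmax (a b c ℓ g : ℕ)
    (ha : 2 ≤ a) (hab : a < b) (hbc : b < c)
    (cab : Nat.Coprime a b)
    (hℓa : ℓ < a) (hℓ : b * ℓ % a = c % a)
    (hg : IsGreatest {n : ℕ | 0 < n ∧ ¬ ∃ x y z : ℕ, n = a * x + b * y + c * z} g) :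
    g + a = Finset.sup (Finset.Ico 1 a) (fun x =>
      Finset.inf' (Finset.range a)
        (Finset.nonempty_range_iff.mpr (by omega : a ≠ 0))
        (fun t => b * ((x + (a - ℓ) * t) % a) + c * t)) := by
  have ha0 : a ≠ 0 := by omega
  obtain ⟨⟨-, hg_not⟩, hg_max⟩ := hg
  change g + a = (Finset.Ico 1 a).sup (residueMin a b c ℓ ha0)
  apply le_antisymm
  · obtain ⟨x, hxa, hx⟩ := Nat.exists_mul_mod_eq_of_coprime g cab.symm ha0
    have hx0 : x ≠ 0 := by
      rintro rfl
      exact hg_not ⟨g / a, 0, 0, by simp [Nat.mul_div_cancel' (Nat.dvd_of_mod_eq_zero hx.symm)]⟩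
    have hg_lt : g < residueMin a b c ℓ ha0 x :=
      not_le.mp fun h => hg_not ((representable_iff_residueMin_le ha0 cab hℓa.le hℓ hx.symm).mpr h)
    calc g + a ≤ residueMin a b c ℓ ha0 x :=
          Nat.ModEq.add_le_of_lt (hx.symm.trans (residueMin_modEq ha0 hℓa.le hℓ x).symm) hg_lt
      _ ≤ _ := Finset.le_sup (Finset.mem_Ico.mpr ⟨Nat.pos_of_ne_zero hx0, hxa⟩)
  · refine Finset.sup_le fun x hx => ?_
    obtain ⟨hx1, hxa⟩ := Finset.mem_Ico.mp hx
    have ha_lt := lt_residueMin ha0 hab hbc cab hℓa.le hℓ (Nat.not_dvd_of_pos_of_lt hx1 hxa)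
    have hmod : residueMin a b c ℓ ha0 x - a ≡ b * x [MOD a] :=
      Nat.add_modEq_right.symm.trans <|
        (Nat.sub_add_cancel ha_lt.le).symm ▸ residueMin_modEq ha0 hℓa.le hℓ x
    have hg_ge := hg_max ⟨Nat.sub_pos_of_lt ha_lt, fun h =>
      absurd ((representable_iff_residueMin_le ha0 cab hℓa.le hℓ hmod).mp h) (by omega)⟩
    omega
end

section
/- Let c > b > a ≥ 2 be pairwise coprime, ℓ = c·b⁻¹ mod a with ℓ > ⌊c/b⌋, q = ⌊a/(a-ℓ)⌋, r = a - q(a-ℓ). Suppose br < cq and set λ = ⌊(cq - br)/(b(a-ℓ) + c)⌋. Then g(a,b,c) + a = b((λ+1)(a-ℓ) + r - 1) if λ ≥ (c(q-1) - br)/(b(a-ℓ)+c), and g(a,b,c) + a = b(a-ℓ-1) + c(q-λ-1) if λ ≤ (c(q-1) - br)/(b(a-ℓ)+c). -/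
/-!
With `d = a - ℓ` we have `a ∣ b d + c`, so `b y + c z ≡ b (y - d z) (mod a)`, and since `b` is a
unit mod `a` every residue class is that of some `b s`. Hence `g + a` is the largest of the least
elements `b y + c z` of the residue classes mod `a`. Write `a = q d + r`, and let
`N₁ = b ((λ + 1) d + r - 1)`, `N₂ = b (d - 1) + c (q - λ - 1)`. Every class contains an element
`b y + c z ≤ max N₁ N₂`: take `z = 0` for small `s`, and otherwise the least `z` with `s + d z ≥ a`.
Conversely, the class of `b ((m + 1) d + r - 1)` has no element below
`min (b ((m + 1) d + r - 1)) (b (d - 1) + c (q - m))`. For `m = λ` and `m = λ + 1` the definition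
of `λ` makes this minimum `N₁`, resp. `N₂` (whose class is that of `b ((λ + 2) d + r - 1)`), and
the condition on `λ` says which of `N₁`, `N₂` is larger.
-/

theorem frobenius_add_eq_of_apery {a b c N g : ℕ} (ha : 0 < a) (haN : a < N)
    (hcover : ∀ n : ℕ, ∃ y z : ℕ, b * y + c * z ≡ n [MOD a] ∧ b * y + c * z ≤ N)
    (hmin : ∀ y z : ℕ, b * y + c * z ≡ N [MOD a] → N ≤ b * y + c * z)
    (hg : IsGreatest {n : ℕ | 0 < n ∧ ¬ ∃ x y z : ℕ, n = a * x + b * y + c * z} g) :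
    g + a = N := by
  obtain ⟨⟨-, hg_gap⟩, hg_max⟩ := hg
  have hN_gap : N - a ≤ g := by
    refine hg_max ⟨by omega, ?_⟩
    rintro ⟨x, y, z, hxyz⟩
    have hmod : b * y + c * z ≡ N [MOD a] :=
      (Nat.modEq_iff_dvd' (by omega)).2 ⟨x + 1, by rw [Nat.mul_add_one]; omega⟩
    have := hmin y z hmod
    omega
  obtain ⟨y, z, hmod, hle⟩ := hcover g
  rcases le_or_gt (b * y + c * z) g with h | h
  · obtain ⟨k, hk⟩ := (Nat.modEq_iff_dvd' h).1 hmod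
    exact absurd ⟨k, y, z, by omega⟩ hg_gap
  · obtain ⟨k, hk⟩ := (Nat.modEq_iff_dvd' h.le).1 hmod.symm
    have : a ≤ a * k := Nat.le_mul_of_pos_right a (Nat.pos_of_ne_zero (by rintro rfl; omega))
    omega

theorem Int.min_le_mul_add_mul {a b c d q r m y z w : ℤ} (hb : 0 ≤ b) (hd : 0 < d) (hr : 0 ≤ r)
    (haqd : a = q * d + r) (ha : 0 ≤ a) (hbr : b * r ≤ c * q) (hbdc : 0 ≤ b * d + c)
    (hy : 0 ≤ y) (hz : 0 ≤ z) (hw : y + a * w = (m + 1) * d + r - 1 + d * z) :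
    min (b * ((m + 1) * d + r - 1)) (b * (d - 1) + c * (q - m)) ≤ b * y + c * z := by
  subst haqd
  -- `b y + c z - (b (d - 1) + c (q - m)) = (z - q w + m) (b d + c) + (w - 1) (c q - b r)`
  rcases le_or_gt w 0 with hw0 | hw1
  · refine min_le_of_left_le ?_
    nlinarith [mul_nonneg hz hbdc, mul_nonneg (mul_nonneg hb ha) (neg_nonneg.2 hw0)]
  · refine min_le_of_right_le ?_
    have hzq : q * w - m ≤ z := by
      by_contra! h
      nlinarith [mul_nonneg hr (sub_nonneg.2 (show 1 ≤ w by omega))]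
    nlinarith [mul_nonneg (sub_nonneg.2 hzq) hbdc,
      mul_nonneg (sub_nonneg.2 (show 1 ≤ w by omega)) (sub_nonneg.2 hbr)]

section
variable {a b c d q r : ℕ}

theorem mul_add_mul_modEq_of_add_eq (hdvd : a ∣ b * d + c) {s y z : ℕ}
    (h : y + a = s + d * z) : b * y + c * z ≡ b * s [MOD a] := by
  rw [← ZMod.natCast_eq_natCast_iff]
  have hbdc := (ZMod.natCast_eq_zero_iff _ _).2 hdvd
  have h' := congrArg (Nat.cast : ℕ → ZMod a) h
  push_cast [ZMod.natCast_self] at hbdc h' ⊢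
  linear_combination b * h' + z * hbdc

theorem modEq_add_mul_of_mul_add_mul_modEq (cab : a.Coprime b) (hdvd : a ∣ b * d + c)
    {s y z : ℕ} (h : b * y + c * z ≡ b * s [MOD a]) : y ≡ s + d * z [MOD a] := by
  rw [← ZMod.natCast_eq_natCast_iff] at h ⊢
  have hbdc := (ZMod.natCast_eq_zero_iff _ _).2 hdvd
  push_cast at hbdc h ⊢
  refine (ZMod.unitOfCoprime b cab.symm).isUnit.mul_left_cancel ?_
  rw [ZMod.coe_unitOfCoprime]
  linear_combination h - z * hbdc


theorem min_le_mul_add_mul_of_modEq (cab : a.Coprime b) (hdvd : a ∣ b * d + c) (hd : 0 < d)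
    (haqd : a = q * d + r) (hbr : b * r ≤ c * q) {m y z : ℕ} (hmq : m ≤ q)
    (h : b * y + c * z ≡ b * ((m + 1) * d + r - 1) [MOD a]) :
    min (b * ((m + 1) * d + r - 1)) (b * (d - 1) + c * (q - m)) ≤ b * y + c * z := by
  obtain ⟨w, hw⟩ := (Nat.modEq_iff_dvd.1 (modEq_add_mul_of_mul_add_mul_modEq cab hdvd h))
  have hs : 1 ≤ (m + 1) * d + r := by nlinarith
  have key := Int.min_le_mul_add_mul (a := a) (b := b) (c := c) (d := d) (q := q) (r := r)
    (m := m) (y := y) (z := z) (w := w) (by positivity) (by exact_mod_cast hd) (by positivity)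
    (by exact_mod_cast haqd) (by positivity) (by exact_mod_cast hbr) (by positivity)
    (by positivity) (by positivity) (by push_cast [hs] at hw ⊢; linarith)
  zify [hs, hd, hmq]
  exact key

theorem exists_mul_add_mul_modEq_le (cab : a.Coprime b) (hdvd : a ∣ b * d + c) (hd : 0 < d)
    (haqd : a = q * d + r) (hrd : r < d) {m : ℕ} (hmq : m < q) (n : ℕ) :
    ∃ y z : ℕ, b * y + c * z ≡ n [MOD a] ∧
      b * y + c * z ≤ max (b * ((m + 1) * d + r - 1)) (b * (d - 1) + c * (q - m - 1)) := by
  have hmd : (m + 1) * d ≤ q * d := Nat.mul_le_mul_right d hmq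
  have hdm : d ≤ (m + 1) * d := Nat.le_mul_of_pos_left d m.succ_pos
  obtain ⟨s, hsa, hs⟩ := Nat.exists_mul_mod_eq_of_coprime n cab.symm (by omega)
  by_cases hsm : s < (m + 1) * d + r
  · refine ⟨s, 0, by simpa [Nat.ModEq] using hs, le_max_of_le_left ?_⟩
    simpa using Nat.mul_le_mul_left b (by omega : s ≤ (m + 1) * d + r - 1)
  · obtain ⟨t, hts⟩ : ∃ t, a = s + 1 + t := ⟨a - 1 - s, by omega⟩
    obtain ⟨e, k, rfl, hed⟩ : ∃ e k, t = e + d * k ∧ e < d :=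
      ⟨t % d, t / d, (Nat.mod_add_div t d).symm, Nat.mod_lt t hd⟩
    have hk : k < q - m - 1 := by
      refine Nat.lt_of_mul_lt_mul_left (a := d) ?_
      rw [Nat.sub_sub, Nat.mul_sub, mul_comm d q, mul_comm d (m + 1)]
      omega
    refine ⟨d - 1 - e, k + 1, (mul_add_mul_modEq_of_add_eq hdvd ?_).trans hs,
      le_max_of_le_right ?_⟩
    · rw [mul_add_one]
      omega
    · gcongr b * ?_ + c * ?_ <;> omega

variable {g lam : ℕ}

theorem frobenius_add_eq_of_ge (hab : a < b) (hc : 0 < c) (cab : a.Coprime b)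
    (hdvd : a ∣ b * d + c) (hd : 0 < d) (hda : d < a) (haqd : a = q * d + r) (hrd : r < d)
    (hlam : lam * (b * d + c) + b * r ≤ c * q)
    (hcase : (c : ℤ) * (q - 1) - b * r ≤ lam * (b * d + c))
    (hg : IsGreatest {n : ℕ | 0 < n ∧ ¬ ∃ x y z : ℕ, n = a * x + b * y + c * z} g) :
    g + a = b * ((lam + 1) * d + r - 1) := by
  have hq : lam < q := by
    by_contra! h
    have hqbd : q * (b * d) = 0 := by nlinarith [Nat.mul_le_mul_right (b * d + c) h]
    simp only [mul_eq_zero] at hqbd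
    rcases hqbd with rfl | rfl | rfl <;> omega
  have hs : 2 ≤ (lam + 1) * d + r := by
    by_contra! h
    have := Nat.le_mul_of_pos_right (lam + 1) hd
    have := Nat.le_mul_of_pos_left d (by omega : 0 < lam + 1)
    obtain ⟨rfl, rfl, rfl⟩ : lam = 0 ∧ d = 1 ∧ r = 0 := by omega
    have : (1 : ℤ) ≤ q - 1 := by omega
    push_cast at hcase
    nlinarith
  have hN : b * (d - 1) + c * (q - lam - 1) ≤ b * ((lam + 1) * d + r - 1) := by
    zify [hd, hq.le, (by omega : 1 ≤ q - lam), (by omega : 1 ≤ (lam + 1) * d + r)]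
    linarith
  refine frobenius_add_eq_of_apery (by omega) ?_ ?_ (fun y z h ↦ ?_) hg
  · exact hab.trans_le (Nat.le_mul_of_pos_right b (by omega))
  · intro n
    simpa [max_eq_left hN] using exists_mul_add_mul_modEq_le cab hdvd hd haqd hrd hq n
  · refine (min_eq_left ?_).symm.trans_le
      (min_le_mul_add_mul_of_modEq cab hdvd hd haqd (by omega) hq.le h)
    zify [hd, hq.le, (by omega : 1 ≤ (lam + 1) * d + r)]
    linarith

theorem frobenius_add_eq_of_le (hac : a < c) (cab : a.Coprime b) (hdvd : a ∣ b * d + c)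
    (hd : 0 < d) (hda : d < a) (haqd : a = q * d + r) (hrd : r < d) (hbr : b * r ≤ c * q)
    (hlam : c * q < (lam + 1) * (b * d + c) + b * r)
    (hcase : (lam : ℤ) * (b * d + c) ≤ c * (q - 1) - b * r)
    (hg : IsGreatest {n : ℕ | 0 < n ∧ ¬ ∃ x y z : ℕ, n = a * x + b * y + c * z} g) :
    g + a = b * (d - 1) + c * (q - lam - 1) := by
  have hb : 0 < b := Nat.pos_of_ne_zero (by rintro rfl; simp at cab; omega)
  have hq : lam + 1 < q := by
    by_contra! h
    have h0 : lam * (b * d) + b * r = 0 := by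
      have : ((lam * (b * d) + b * r : ℕ) : ℤ) ≤ 0 := by push_cast; nlinarith
      omega
    simp only [Nat.add_eq_zero_iff, mul_eq_zero, hb.ne', hd.ne', or_false, false_or] at h0
    obtain ⟨rfl, rfl⟩ := h0
    nlinarith
  have hs : 1 ≤ (lam + 1 + 1) * d + r := by
    have := Nat.le_mul_of_pos_left d (by omega : 0 < lam + 1 + 1)
    omega
  have hN : b * ((lam + 1) * d + r - 1) ≤ b * (d - 1) + c * (q - lam - 1) := by
    have := Nat.le_mul_of_pos_left d (by omega : 0 < lam + 1)
    zify [hd, (by omega : lam ≤ q), (by omega : 1 ≤ q - lam), (by omega : 1 ≤ (lam + 1) * d + r)]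
    linarith
  have hN2 : b * (d - 1) + c * (q - lam - 1) ≡ b * ((lam + 1 + 1) * d + r - 1) [MOD a] := by
    refine mul_add_mul_modEq_of_add_eq hdvd ?_
    rw [haqd]
    zify [hd, hs, (by omega : lam ≤ q), (by omega : 1 ≤ q - lam)]
    ring
  refine frobenius_add_eq_of_apery (by omega) ?_ ?_ (fun y z h ↦ ?_) hg
  · exact hac.trans_le (le_add_left (Nat.le_mul_of_pos_right c (by omega)))
  · intro n
    simpa [max_eq_right hN] using
      exists_mul_add_mul_modEq_le cab hdvd hd haqd hrd (by omega : lam < q) n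
  · have := min_le_mul_add_mul_of_modEq cab hdvd hd haqd hbr hq.le (h.trans hN2)
    rw [min_eq_right] at this
    · simpa only [Nat.sub_sub] using this
    zify [hd, hq.le, (by omega : lam ≤ q), (by omega : 1 ≤ q - lam), hs]
    linarith

end

theorem frobenius_br_lt_cq_general (a b c ℓ q r lam g : ℕ)
    (hab : a < b) (hbc : b < c)
    (cab : Nat.Coprime a b)
    (hℓa : ℓ < a) (hℓ : b * ℓ % a = c % a)
    (hk : c / b < ℓ)
    (hq : q = a / (a - ℓ)) (hr : r = a - q * (a - ℓ))
    (hbr : b * r < c * q)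
    (hlam : lam = (c * q - b * r) / (b * (a - ℓ) + c))
    (hg : IsGreatest {n : ℕ | 0 < n ∧ ¬ ∃ x y z : ℕ, n = a * x + b * y + c * z} g) :
    (((c : ℚ) * ((q : ℚ) - 1) - (b : ℚ) * (r : ℚ)) / ((b : ℚ) * ((a - ℓ : ℕ) : ℚ) + (c : ℚ))
        ≤ (lam : ℚ) →
      g + a = b * ((lam + 1) * (a - ℓ) + r - 1))
    ∧ ((lam : ℚ) ≤
        ((c : ℚ) * ((q : ℚ) - 1) - (b : ℚ) * (r : ℚ)) / ((b : ℚ) * ((a - ℓ : ℕ) : ℚ) + (c : ℚ)) →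
      g + a = b * (a - ℓ - 1) + c * (q - lam - 1)) := by
  have hℓ0 : 0 < ℓ := Nat.zero_lt_of_lt hk
  have hdvd : a ∣ b * (a - ℓ) + c := by
    rw [← ZMod.natCast_eq_zero_iff]
    have := (ZMod.natCast_eq_natCast_iff' _ _ _).2 hℓ
    push_cast [Nat.cast_sub hℓa.le, ZMod.natCast_self] at this ⊢
    linear_combination -this
  have hd : 0 < a - ℓ := by omega
  have hda : a - ℓ < a := by omega
  generalize a - ℓ = d at *
  have haqd : a = q * d + r := by
    have : q * d ≤ a := hq ▸ Nat.div_mul_le_self a d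
    omega
  have hrd : r < d := by
    have := hq ▸ Nat.div_add_mod' a d
    have := Nat.mod_lt a hd
    omega
  have hlam_le : lam * (b * d + c) + b * r ≤ c * q := by
    have : lam * (b * d + c) ≤ c * q - b * r := hlam ▸ Nat.div_mul_le_self _ _
    omega
  have hlam_lt : c * q < (lam + 1) * (b * d + c) + b * r := by
    have : c * q - b * r < lam * (b * d + c) + (b * d + c) :=
      hlam ▸ Nat.lt_div_mul_add (by omega)
    rw [add_one_mul]
    omega
  have hpos : (0 : ℚ) < b * d + c := by
    have : (0 : ℚ) < c := Nat.cast_pos.2 (by omega)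
    positivity
  refine ⟨fun hcase ↦ ?_, fun hcase ↦ ?_⟩
  · rw [div_le_iff₀ hpos] at hcase
    exact frobenius_add_eq_of_ge hab (by omega) cab hdvd hd hda haqd hrd hlam_le
      (by exact_mod_cast hcase) hg
  · rw [le_div_iff₀ hpos] at hcase
    exact frobenius_add_eq_of_le (by omega) cab hdvd hd hda haqd hrd hbr.le hlam_lt
      (by exact_mod_cast hcase) hg

/-- Theorem 3: the case `ℓ > k` and `br < cq`. -/
theorem frobenius_br_lt_cq (a b c ℓ q r lam g : ℕ)
    (ha : 2 ≤ a) (hab : a < b) (hbc : b < c)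
    (cab : Nat.Coprime a b) (cac : Nat.Coprime a c) (cbc : Nat.Coprime b c)
    (hℓa : ℓ < a) (hℓ : b * ℓ % a = c % a)
    (hk : c / b < ℓ)
    (hq : q = a / (a - ℓ)) (hr : r = a - q * (a - ℓ))
    (hbr : b * r < c * q)
    (hlam : lam = (c * q - b * r) / (b * (a - ℓ) + c))
    (hg : IsGreatest {n : ℕ | 0 < n ∧ ¬ ∃ x y z : ℕ, n = a * x + b * y + c * z} g) :
    (((c : ℚ) * ((q : ℚ) - 1) - (b : ℚ) * (r : ℚ)) / ((b : ℚ) * ((a - ℓ : ℕ) : ℚ) + (c : ℚ))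
        ≤ (lam : ℚ) →
      g + a = b * ((lam + 1) * (a - ℓ) + r - 1))
    ∧ ((lam : ℚ) ≤
        ((c : ℚ) * ((q : ℚ) - 1) - (b : ℚ) * (r : ℚ)) / ((b : ℚ) * ((a - ℓ : ℕ) : ℚ) + (c : ℚ)) →
      g + a = b * (a - ℓ - 1) + c * (q - lam - 1)) :=
  frobenius_br_lt_cq_general a b c ℓ q r lam g hab hbc cab hℓa hℓ hk hq hr hbr hlam hg
end

section
/- Let c > b > a ≥ 2 be pairwise coprime, ℓ = c·b⁻¹ mod a with ℓ > ⌊c/b⌋, q = ⌊a/(a-ℓ)⌋, r = a - q(a-ℓ), and assume br > cq. Define X = {x ∈ {1,...,r} : m(bx) ≡ 0 (mod c)}, where m(bx) is the least positive integer congruent to bx mod a that is a nonnegative combination of b and c. Then r ∈ X and min X = min{x ∈ {1,...,r} : m(bx) ≠ bx}. -/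
/-- If `ℓ > k` and `br > cq`, then `r ∈ 𝒳` and
`min 𝒳 = min {x ∈ {1,…,r} : m(bx) ≠ bx}`, where
`𝒳 = {x ∈ {1,…,r} : m(bx) ≡ 0 (mod c)}`. -/
theorem X_min (a b c ℓ q r : ℕ)
    (ha : 2 ≤ a) (hab : a < b) (hbc : b < c)
    (cab : Nat.Coprime a b) (cac : Nat.Coprime a c) (cbc : Nat.Coprime b c)
    (hℓa : ℓ < a) (hℓ : b * ℓ % a = c % a)
    (hk : c / b < ℓ)
    (hq : q = a / (a - ℓ)) (hr : r = a - q * (a - ℓ))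
    (hbr : c * q < b * r)
    (m : ℕ → ℕ)
    (hm : ∀ x : ℕ, m x =
      sInf {z : ℕ | 0 < z ∧ (∃ n₁ n₂ : ℕ, z = b * n₁ + c * n₂) ∧ z % a = (b * x) % a}) :
    (1 ≤ r ∧ r ≤ r ∧ m r % c = 0)
    ∧ sInf {x : ℕ | 1 ≤ x ∧ x ≤ r ∧ m x % c = 0}
        = sInf {x : ℕ | 1 ≤ x ∧ x ≤ r ∧ m x ≠ b * x} := by
  have hd : 0 < a - ℓ := by omega
  -- q ≥ 1
  have hq1 : 1 ≤ q := by
    subst hq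
    exact (Nat.one_le_div_iff hd).mpr (by omega)
  -- basic division facts: q*(a-ℓ) + r = a, r < a - ℓ
  have e0 : (a - ℓ) * q + a % (a - ℓ) = a := by rw [hq]; exact Nat.div_add_mod a (a - ℓ)
  have hr' : r = a - q * (a - ℓ) := hr
  have hcomm : q * (a - ℓ) = (a - ℓ) * q := Nat.mul_comm _ _
  have hmlt : a % (a - ℓ) < a - ℓ := Nat.mod_lt a hd
  have hmain : (a - ℓ) * q + r = a := by omega
  have hrd : r < a - ℓ := by omega
  -- r ≥ 1 from c*q < b*r
  have hr1 : 1 ≤ r := by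
    rcases Nat.eq_zero_or_pos r with h | h
    · rw [h, Nat.mul_zero] at hbr; omega
    · exact h
  have hra : r < a := by omega
  -- ℓ*q ≡ r [MOD a]
  obtain ⟨q', rfl⟩ : ∃ q', q = q' + 1 := ⟨q - 1, by omega⟩
  have e1 : ℓ * (q' + 1) + (a - ℓ) * (q' + 1) = a * (q' + 1) := by
    rw [← Nat.add_mul]; congr 1; omega
  have e2 : a * (q' + 1) = a * q' + a := by ring
  have e3 : ℓ * (q' + 1) = r + a * q' := by omega
  have hlq : ℓ * (q' + 1) ≡ r [MOD a] := by
    unfold Nat.ModEq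
    rw [e3, Nat.add_mul_mod_self_left]
  -- c*q ≡ b*r [MOD a]
  have hℓ' : b * ℓ ≡ c [MOD a] := hℓ
  have hcqbr : c * (q' + 1) ≡ b * r [MOD a] := by
    calc c * (q' + 1) ≡ (b * ℓ) * (q' + 1) [MOD a] := (hℓ'.mul_right _).symm
      _ = b * (ℓ * (q' + 1)) := by ring
      _ ≡ b * r [MOD a] := hlq.mul_left b
  -- lower bound: any candidate for class b*r is ≥ c*q
  have lb : ∀ z : ℕ, 0 < z → (∃ n₁ n₂ : ℕ, z = b * n₁ + c * n₂) →
      z % a = (b * r) % a → c * (q' + 1) ≤ z := by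
    rintro z hz ⟨n₁, n₂, rfl⟩ hcong
    by_contra hlt
    push_neg at hlt
    have hn₂ : n₂ < q' + 1 := by
      by_contra h
      push_neg at h
      have : c * (q' + 1) ≤ c * n₂ := Nat.mul_le_mul_left c h
      omega
    set t := q' + 1 - n₂ with ht
    have ht1 : 1 ≤ t := by omega
    have htq : t ≤ q' + 1 := by omega
    -- b*n₁ ≡ c*t [MOD a]
    have hsplit : c * (q' + 1) = c * n₂ + c * t := by
      rw [← Nat.mul_add]; congr 1; omega
    have h4 : b * n₁ + c * n₂ ≡ c * n₂ + c * t [MOD a] := by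
      calc b * n₁ + c * n₂ ≡ c * (q' + 1) [MOD a] := by
            unfold Nat.ModEq; rw [hcong]; exact hcqbr.symm
        _ = c * n₂ + c * t := hsplit
    have h5 : b * n₁ ≡ c * t [MOD a] := by
      have := (Nat.ModEq.add_right_cancel' (c * n₂)
        (show b * n₁ + c * n₂ ≡ c * t + c * n₂ [MOD a] by
          calc b * n₁ + c * n₂ ≡ c * n₂ + c * t [MOD a] := h4
            _ = c * t + c * n₂ := by ring))
      exact this
    have h6 : b * n₁ ≡ b * (ℓ * t) [MOD a] := by
      calc b * n₁ ≡ c * t [MOD a] := h5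
        _ ≡ (b * ℓ) * t [MOD a] := (hℓ'.mul_right t).symm
        _ = b * (ℓ * t) := by ring
    have h7 : n₁ ≡ ℓ * t [MOD a] :=
      Nat.ModEq.cancel_left_of_coprime (show Nat.gcd a b = 1 from cab) h6
    -- compute ℓ*t % a = a - (a-ℓ)*t
    clear_value t
    obtain ⟨t', rfl⟩ : ∃ t', t = t' + 1 := ⟨t - 1, by omega⟩
    have f1 : ℓ * (t' + 1) + (a - ℓ) * (t' + 1) = a * (t' + 1) := by
      rw [← Nat.add_mul]; congr 1; omega
    have f2 : a * (t' + 1) = a * t' + a := by ring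
    have f3 : (a - ℓ) * (t' + 1) ≤ (a - ℓ) * (q' + 1) := Nat.mul_le_mul_left _ (by omega)
    have f4 : ℓ * (t' + 1) = a * t' + (a - (a - ℓ) * (t' + 1)) := by omega
    have f5 : (a - ℓ) * (t' + 1) ≥ 1 := by
      have : 1 * 1 ≤ (a - ℓ) * (t' + 1) := Nat.mul_le_mul (by omega) (by omega)
      omega
    have f6 : ℓ * (t' + 1) % a = a - (a - ℓ) * (t' + 1) := by
      rw [f4, Nat.mul_add_mod]
      exact Nat.mod_eq_of_lt (by omega)
    have h8 : n₁ % a = a - (a - ℓ) * (t' + 1) := by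
      have := h7; unfold Nat.ModEq at this; omega
    have h9 : a - (a - ℓ) * (t' + 1) ≤ n₁ := le_trans (by omega) (Nat.mod_le n₁ a)
    -- a - (a-ℓ)*t = r + (a-ℓ)*n₂ ≥ r
    have h10 : (a - ℓ) * (t' + 1) + (a - ℓ) * n₂ = (a - ℓ) * (q' + 1) := by
      rw [← Nat.mul_add]; congr 1; omega
    have h11 : r ≤ n₁ := by omega
    have h12 : b * r ≤ b * n₁ := Nat.mul_le_mul_left b h11
    omega
  -- m r = c * q
  have hmemr : c * (q' + 1) ∈ {z : ℕ | 0 < z ∧ (∃ n₁ n₂ : ℕ, z = b * n₁ + c * n₂) ∧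
      z % a = (b * r) % a} := by
    refine ⟨Nat.mul_pos (by omega) (by omega), ⟨0, q' + 1, by ring⟩, hcqbr⟩
  have hmr : m r = c * (q' + 1) := by
    rw [hm r]
    refine le_antisymm (Nat.sInf_le hmemr) ?_
    have hne : ({z : ℕ | 0 < z ∧ (∃ n₁ n₂ : ℕ, z = b * n₁ + c * n₂) ∧
        z % a = (b * r) % a}).Nonempty := ⟨_, hmemr⟩
    obtain ⟨hz1, hz2, hz3⟩ := Nat.sInf_mem hne
    exact lb _ hz1 hz2 hz3
  have part1 : 1 ≤ r ∧ r ≤ r ∧ m r % c = 0 := ⟨hr1, le_refl r, by rw [hmr]; exact Nat.mul_mod_right c _⟩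
  refine ⟨part1, ?_⟩
  -- generic facts about m
  have hmle : ∀ x : ℕ, 1 ≤ x → m x ≤ b * x := by
    intro x hx
    rw [hm x]
    exact Nat.sInf_le ⟨Nat.mul_pos (by omega) hx, ⟨x, 0, by ring⟩, rfl⟩
  have hmspec : ∀ x : ℕ, 1 ≤ x → 0 < m x ∧ (∃ n₁ n₂ : ℕ, m x = b * n₁ + c * n₂) ∧
      m x % a = (b * x) % a := by
    intro x hx
    rw [hm x]
    have hne : ({z : ℕ | 0 < z ∧ (∃ n₁ n₂ : ℕ, z = b * n₁ + c * n₂) ∧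
        z % a = (b * x) % a}).Nonempty :=
      ⟨b * x, Nat.mul_pos (by omega) hx, ⟨x, 0, by ring⟩, rfl⟩
    exact Nat.sInf_mem hne
  set X := {x : ℕ | 1 ≤ x ∧ x ≤ r ∧ m x % c = 0} with hX
  set Y := {x : ℕ | 1 ≤ x ∧ x ≤ r ∧ m x ≠ b * x} with hY
  have hrX : r ∈ X := ⟨hr1, le_refl r, part1.2.2⟩
  have hrY : r ∈ Y := ⟨hr1, le_refl r, by rw [hmr]; omega⟩
  have hXY : X ⊆ Y := by
    rintro x ⟨hx1, hxr, hxc⟩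
    refine ⟨hx1, hxr, ?_⟩
    intro heq
    have hdvd : c ∣ b * x := by
      rw [← heq]; exact Nat.dvd_of_mod_eq_zero hxc
    have hcx : c ∣ x := (Nat.Coprime.dvd_of_dvd_mul_left cbc.symm hdvd)
    have := Nat.le_of_dvd (by omega) hcx
    omega
  -- sInf Y ∈ X
  have hsY : sInf Y ∈ Y := Nat.sInf_mem ⟨r, hrY⟩
  obtain ⟨hx1, hxr, hxne⟩ := hsY
  set x := sInf Y with hxdef
  have hxa : x < a := by omega
  have hlt : m x < b * x := lt_of_le_of_ne (hmle x hx1) hxne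
  obtain ⟨hmpos, ⟨n₁, n₂, hrep⟩, hcong⟩ := hmspec x hx1
  have hsYX : x ∈ X := by
    rcases Nat.eq_zero_or_pos n₂ with hn2 | hn2
    · -- n₂ = 0 impossible
      exfalso
      rw [hn2, Nat.mul_zero, Nat.add_zero] at hrep
      have hb : b * n₁ ≡ b * x [MOD a] := by
        unfold Nat.ModEq; rw [← hrep]; exact hcong
      have h7 : n₁ ≡ x [MOD a] :=
        Nat.ModEq.cancel_left_of_coprime (show Nat.gcd a b = 1 from cab) hb
      have hn1x : n₁ < x := by
        have : b * n₁ < b * x := by omega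
        exact Nat.lt_of_mul_lt_mul_left this
      have : n₁ % a = x % a := h7
      rw [Nat.mod_eq_of_lt (by omega), Nat.mod_eq_of_lt hxa] at this
      omega
    rcases Nat.eq_zero_or_pos n₁ with hn1 | hn1
    · -- n₁ = 0 : m x = c * n₂, multiple of c
      rw [hn1, Nat.mul_zero, Nat.zero_add] at hrep
      exact ⟨hx1, hxr, by rw [hrep]; exact Nat.mul_mod_right c _⟩
    · -- n₁ ≥ 1 : contradiction with minimality
      exfalso
      have hcn2 : 0 < c * n₂ := Nat.mul_pos (by omega) hn2
      have hn1x : n₁ < x := by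
        have hb : b * n₁ < b * x := by omega
        exact Nat.lt_of_mul_lt_mul_left hb
      set x' := x - n₁ with hx'
      have hx'1 : 1 ≤ x' := by omega
      have hx'r : x' ≤ r := by omega
      have hbx' : b * x' + b * n₁ = b * x := by
        rw [← Nat.mul_add]; congr 1; omega
      have hcong' : (c * n₂) % a = (b * x') % a := by
        have h1 : b * n₁ + c * n₂ ≡ b * x [MOD a] := by
          unfold Nat.ModEq; rw [← hrep]; exact hcong
        have h2 : c * n₂ + b * n₁ ≡ b * x' + b * n₁ [MOD a] := by
          calc c * n₂ + b * n₁ = b * n₁ + c * n₂ := by ring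
            _ ≡ b * x [MOD a] := h1
            _ = b * x' + b * n₁ := hbx'.symm
        exact Nat.ModEq.add_right_cancel' (b * n₁) h2
      have hmle' : m x' ≤ c * n₂ := by
        rw [hm x']
        exact Nat.sInf_le ⟨hcn2, ⟨0, n₂, by ring⟩, hcong'⟩
      have hx'Y : x' ∉ Y := Nat.notMem_of_lt_sInf (by omega)
      have hmx' : m x' = b * x' := by
        by_contra h
        exact hx'Y ⟨hx'1, hx'r, h⟩
      omega
  exact le_antisymm (Nat.sInf_le hsYX) (Nat.sInf_le (hXY (Nat.sInf_mem ⟨r, hrX⟩)))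
end

section
/- Let c > b > a ≥ 2 be pairwise coprime, ℓ = c·b⁻¹ mod a with ℓ > ⌊c/b⌋, q = ⌊a/(a-ℓ)⌋, r = a - q(a-ℓ), u = (a-ℓ) mod r, and assume br > cq. Then, with m(·) the minimal positive combination of b and c in a residue class mod a, it holds that max over 0 ≤ x < a of m(bx) equals max{ max over 0 ≤ x < u of m(bx) + cq, max over u ≤ x < r of m(bx) } + cq·⌊(a-ℓ-1)/r⌋. -/
/-- Lemma 9: if `ℓ > k` and `br > cq` then
`max_{0 ≤ x < a} m(bx)
  = max { max_{0 ≤ x < u} m(bx) + cq, max_{u ≤ x < r} m(bx) } + cq⌊(a-ℓ-1)/r⌋`,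
where `u = (a-ℓ) mod r` and `m(b·0) = 0` by convention. -/
theorem max_m_formula (a b c ℓ q r u : ℕ)
    (ha : 2 ≤ a) (hab : a < b) (hbc : b < c)
    (cab : Nat.Coprime a b) (cac : Nat.Coprime a c) (cbc : Nat.Coprime b c)
    (hℓa : ℓ < a) (hℓ : b * ℓ % a = c % a)
    (hk : c / b < ℓ)
    (hq : q = a / (a - ℓ)) (hr : r = a - q * (a - ℓ))
    (hu : u = (a - ℓ) % r)
    (hbr : c * q < b * r)
    (m : ℕ → ℕ)
    (hm0 : m 0 = 0)
    (hm : ∀ x : ℕ, 0 < x → m x =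
      sInf {z : ℕ | 0 < z ∧ (∃ n₁ n₂ : ℕ, z = b * n₁ + c * n₂) ∧ z % a = (b * x) % a}) :
    Finset.sup (Finset.range a) m
      = max (Finset.sup (Finset.range u) (fun x => m x + c * q))
            (Finset.sup (Finset.Ico u r) m)
        + c * q * ((a - ℓ - 1) / r) := by
  set d := a - ℓ with hd
  have hd1 : 1 ≤ d := by omega
  have hd0 : 0 < d := hd1
  have hb1 : 1 ≤ b := by omega
  have hc1 : 1 ≤ c := by omega
  have hda : ℓ + d = a := by omega
  have hdlea : d ≤ a := by omega
  have hq1 : 1 ≤ q := by rw [hq]; exact (Nat.one_le_div_iff hd0).mpr hdlea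
  have hqd_le : q * d ≤ a := by rw [hq]; exact Nat.div_mul_le_self a d
  have hqdr : q * d + r = a := by rw [hr]; omega
  have hrmod : r = a % d := by
    have h1 := Nat.div_add_mod a d
    have h2 : a / d * d = d * (a / d) := Nat.mul_comm _ _
    rw [hr, hq]; omega
  have hrd : r < d := by rw [hrmod]; exact Nat.mod_lt a hd0
  have hr2 : 2 ≤ r := by
    have hcq : c ≤ c * q := Nat.le_mul_of_pos_right c hq1
    rcases Nat.lt_or_ge r 2 with h | h
    · interval_cases r <;> omega
    · exact h
  have hr0 : 0 < r := by omega
  -- coprimality facts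
  have hgcd1 : Nat.gcd a (b * ℓ) = Nat.gcd a c := by
    calc Nat.gcd a (b * ℓ) = Nat.gcd (b * ℓ % a) a := Nat.gcd_rec a (b * ℓ)
      _ = Nat.gcd (c % a) a := by rw [hℓ]
      _ = Nat.gcd a c := (Nat.gcd_rec a c).symm
  have hco_aℓ : Nat.Coprime a ℓ :=
    Nat.Coprime.coprime_dvd_right (dvd_mul_left ℓ b)
      (show Nat.Coprime a (b * ℓ) from hgcd1.trans cac)
  have hco_ad : Nat.Coprime a d := by
    have h1 : Nat.gcd a d ∣ ℓ := by
      have h2 : Nat.gcd a d ∣ a - d := Nat.dvd_sub (Nat.gcd_dvd_left a d) (Nat.gcd_dvd_right a d)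
      have h3 : a - d = ℓ := by omega
      rwa [h3] at h2
    have h4 : Nat.gcd a d ∣ 1 := hco_aℓ ▸ Nat.dvd_gcd (Nat.gcd_dvd_left a d) h1
    exact Nat.dvd_one.mp h4
  have hco_dr : Nat.gcd d r = 1 := by
    have h1 : Nat.gcd d a = Nat.gcd r d := by rw [Nat.gcd_rec d a, ← hrmod]
    have h2 : Nat.gcd d a = 1 := Nat.coprime_comm.mp hco_ad
    rw [h1] at h2
    rw [Nat.gcd_comm]; exact h2
  have hu_r : u < r := by rw [hu]; exact Nat.mod_lt d hr0
  have hu1 : 1 ≤ u := by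
    rcases Nat.eq_zero_or_pos u with h | h
    · exfalso
      have hdvd : r ∣ d := Nat.dvd_of_mod_eq_zero (hu ▸ h)
      have h4 : r ∣ 1 := hco_dr ▸ Nat.dvd_gcd hdvd dvd_rfl
      have := Nat.dvd_one.mp h4
      omega
    · exact h
  set p := d / r with hp
  have hpr : r * p + u = d := by rw [hu, hp]; exact Nat.div_add_mod d r
  have hp1 : 1 ≤ p := by rw [hp]; exact (Nat.one_le_div_iff hr0).mpr (by omega)
  have hgoalp : (d - 1) / r = p := by
    apply le_antisymm
    · rw [hp]; exact Nat.div_le_div_right (by omega)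
    · rw [Nat.le_div_iff_mul_le hr0]
      have hc : p * r = r * p := Nat.mul_comm _ _
      omega
  -- basic membership / sInf lemmas
  have hSne : ∀ x : ℕ, 0 < x →
      (b * x) ∈ {z : ℕ | 0 < z ∧ (∃ n₁ n₂ : ℕ, z = b * n₁ + c * n₂) ∧ z % a = (b * x) % a} := by
    intro x hx
    exact ⟨Nat.mul_pos (by omega) hx, ⟨x, 0, by ring⟩, rfl⟩
  have hm_mem : ∀ x : ℕ, 0 < x →
      (0 < m x ∧ (∃ n₁ n₂ : ℕ, m x = b * n₁ + c * n₂) ∧ m x % a = (b * x) % a) := by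
    intro x hx
    have h1 := hm x hx
    have h2 := Nat.sInf_mem (⟨b * x, hSne x hx⟩ : Set.Nonempty _)
    rw [← h1] at h2
    exact h2
  have hcong_key : ∀ Y T X W : ℕ, Y + ℓ * T = X + a * W →
      (b * Y + c * T) % a = (b * X) % a := by
    intro Y T X W h
    have h1 : (b * ℓ) * T ≡ c * T [MOD a] := Nat.ModEq.mul_right T hℓ
    have h2 : b * Y + (b * ℓ) * T ≡ b * Y + c * T [MOD a] := Nat.ModEq.add_left _ h1
    have h3 : b * Y + (b * ℓ) * T = b * X + a * (b * W) := by
      have h4 : b * Y + (b * ℓ) * T = b * (Y + ℓ * T) := by ring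
      rw [h4, h]; ring
    calc (b * Y + c * T) % a = (b * Y + (b * ℓ) * T) % a := (h2.symm : _)
      _ = (b * X + a * (b * W)) % a := by rw [h3]
      _ = (b * X) % a := by rw [Nat.add_mul_mod_self_left]
  have hub : ∀ x y t : ℕ, 0 < x → (y = 0 → 1 ≤ t) → (b * y + c * t) % a = (b * x) % a →
      m x ≤ m y + c * t := by
    intro x y t hx hyt hcong
    rw [hm x hx]
    rcases Nat.eq_zero_or_pos y with hy0 | hy0
    · subst hy0
      rw [hm0]
      apply Nat.sInf_le
      have ht := hyt rfl
      have hct : 0 < c * t := Nat.mul_pos (by omega) (by omega)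
      exact ⟨by omega, ⟨0, t, by ring⟩, by simpa using hcong⟩
    · obtain ⟨hpos, ⟨n₁, n₂, hrep⟩, hyc⟩ := hm_mem y hy0
      apply Nat.sInf_le
      refine ⟨by omega, ⟨n₁, n₂ + t, by rw [hrep]; ring⟩, ?_⟩
      calc (m y + c * t) % a = (b * y + c * t) % a := Nat.ModEq.add_right (c * t) hyc
        _ = (b * x) % a := hcong
  have hub_g : ∀ x j : ℕ, 0 < x → x < a → m x ≤ b * ((x + j * d) % a) + c * j := by
    intro x j hx hxa
    have hKle : (x + j * d) / a ≤ j := by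
      have h2 : j * d ≤ j * a := Nat.mul_le_mul_left j hdlea
      have h3 : j * a = a * j := Nat.mul_comm _ _
      have h4 := (Nat.div_lt_iff_lt_mul (show 0 < a by omega)).mpr
        (show x + j * d < (j + 1) * a by
          have h5 : (j + 1) * a = j * a + a := by ring
          omega)
      omega
    have hcong : (b * ((x + j * d) % a) + c * j) % a = (b * x) % a := by
      apply hcong_key _ _ _ (j - (x + j * d) / a)
      have h1 := Nat.div_add_mod (x + j * d) a
      have h2 : ℓ * j + d * j = a * j := by
        calc ℓ * j + d * j = (ℓ + d) * j := by ring
          _ = a * j := by rw [hda]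
      have h3 : a * (j - (x + j * d) / a) + a * ((x + j * d) / a) = a * j := by
        rw [← Nat.mul_add, Nat.sub_add_cancel hKle]
      have h4 : j * d = d * j := Nat.mul_comm _ _
      omega
    rw [hm x hx]
    apply Nat.sInf_le
    refine ⟨?_, ⟨(x + j * d) % a, j, rfl⟩, hcong⟩
    rcases Nat.eq_zero_or_pos j with hj | hj
    · subst hj
      simp only [Nat.zero_mul, Nat.add_zero, Nat.mul_zero]
      rw [Nat.mod_eq_of_lt hxa]
      have := Nat.mul_pos (show 0 < b by omega) hx
      omega
    · have hcj : 0 < c * j := Nat.mul_pos (by omega) hj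
      omega
  have hub_bx : ∀ x : ℕ, x < a → m x ≤ b * x := by
    intro x hxa
    rcases Nat.eq_zero_or_pos x with h | h
    · subst h; rw [hm0]; omega
    · have h1 := hub_g x 0 h hxa
      simpa [Nat.mod_eq_of_lt hxa] using h1
  have hlb : ∀ x K : ℕ, 0 < x → x < a →
      (∀ j : ℕ, K ≤ b * ((x + j * d) % a) + c * j) → K ≤ m x := by
    intro x K hx hxa hK
    rw [hm x hx]
    apply le_csInf ⟨b * x, hSne x hx⟩
    rintro z ⟨hz0, ⟨n₁, n₂, rfl⟩, hzc⟩
    have h1 : (b * ℓ) * n₂ ≡ c * n₂ [MOD a] := Nat.ModEq.mul_right n₂ hℓ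
    have h2 : b * (n₁ + ℓ * n₂) ≡ b * x [MOD a] := by
      have h3 : b * n₁ + (b * ℓ) * n₂ ≡ b * n₁ + c * n₂ [MOD a] := Nat.ModEq.add_left _ h1
      have h4 : b * (n₁ + ℓ * n₂) = b * n₁ + (b * ℓ) * n₂ := by ring
      rw [h4]
      exact h3.trans hzc
    have h5 : n₁ + ℓ * n₂ ≡ x [MOD a] := Nat.ModEq.cancel_left_of_coprime cab h2
    have h6 : n₁ + ℓ * n₂ + n₂ * d ≡ x + n₂ * d [MOD a] := h5.add_right _
    have h7 : n₁ + ℓ * n₂ + n₂ * d = n₁ + a * n₂ := by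
      have h8 : n₁ + ℓ * n₂ + n₂ * d = n₁ + (ℓ + d) * n₂ := by ring
      rw [h8, hda]
    have h8 : n₁ % a = (x + n₂ * d) % a := by
      calc n₁ % a = (n₁ + a * n₂) % a := (Nat.add_mul_mod_self_left n₁ a n₂).symm
        _ = (n₁ + ℓ * n₂ + n₂ * d) % a := by rw [h7]
        _ = (x + n₂ * d) % a := h6
    have h10 : (x + n₂ * d) % a ≤ n₁ := by
      calc (x + n₂ * d) % a = n₁ % a := h8.symm
        _ ≤ n₁ := Nat.mod_le n₁ a
    calc K ≤ b * ((x + n₂ * d) % a) + c * n₂ := hK n₂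
      _ ≤ b * n₁ + c * n₂ := by
        have h11 := Nat.mul_le_mul_left b h10; omega
  -- step lemmas
  have hL3 : ∀ v, r ≤ v → v < d → m v ≤ m (v - r) + c * q := by
    intro v hvr hvd
    apply hub v (v - r) q (by omega) (fun _ => hq1)
    apply hcong_key _ _ _ (q - 1)
    have h2 : ℓ * q + d * q = a * q := by
      calc ℓ * q + d * q = (ℓ + d) * q := by ring
        _ = a * q := by rw [hda]
    have h3 : a * (q - 1) + a = a * q := by
      have h4 : a * (q - 1) + a * 1 = a * ((q - 1) + 1) := by ring
      have h5 : q - 1 + 1 = q := by omega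
      rw [h5] at h4; omega
    have h6 : d * q = q * d := Nat.mul_comm _ _
    omega
  have hL2 : ∀ w, w + r < d → m w + c * q ≤ m (w + r) := by
    intro w hwd
    apply hlb (w + r) _ (by omega) (by omega)
    intro j
    rcases Nat.lt_or_ge j q with hj | hj
    · have hjd : j * d + d ≤ q * d := by
        have h1 : (j + 1) * d ≤ q * d := Nat.mul_le_mul_right d (by omega)
        have h2 : (j + 1) * d = j * d + d := by ring
        omega
      have hlt : w + r + j * d < a := by omega
      rw [Nat.mod_eq_of_lt hlt]
      have h3 : m w ≤ b * w := hub_bx w (by omega)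
      have h4 : b * (w + r + j * d) = b * w + b * r + b * (j * d) := by ring
      omega
    · have h1 : (j - q) * d + q * d = j * d := by
        have h0 : ((j - q) + q) * d = j * d := by rw [Nat.sub_add_cancel hj]
        have h2 : ((j - q) + q) * d = (j - q) * d + q * d := by ring
        omega
      have harg : w + r + j * d = w + (j - q) * d + a := by omega
      rw [harg, Nat.add_mod_right]
      have hcj : c * (j - q) + c * q = c * j := by
        have h0 : c * ((j - q) + q) = c * j := by rw [Nat.sub_add_cancel hj]
        have h2 : c * ((j - q) + q) = c * (j - q) + c * q := by ring
        omega
      rcases Nat.eq_zero_or_pos w with hw0 | hw0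
      · subst hw0
        rw [hm0]
        have h5 : c * q ≤ c * j := Nat.mul_le_mul_left c hj
        omega
      · have h5 := hub_g w (j - q) hw0 (by omega)
        omega
  have hL1 : ∀ v, d ≤ v + r → v < d → m v + c * q ≤ m (v + r) := by
    intro v hdv hvd
    have hv1 : 0 < v := by omega
    have hdr_a : d + r ≤ a := by
      have h0 : d ≤ q * d := Nat.le_mul_of_pos_left d hq1
      omega
    apply hlb (v + r) _ (by omega) (by omega)
    intro j
    rcases Nat.lt_or_ge j q with hj | hj
    · have hjd : j * d + d ≤ q * d := by
        have h1 : (j + 1) * d ≤ q * d := Nat.mul_le_mul_right d (by omega)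
        have h2 : (j + 1) * d = j * d + d := by ring
        omega
      have hlt : v + r + j * d < a := by omega
      rw [Nat.mod_eq_of_lt hlt]
      have h3 : m v ≤ b * v := hub_bx v (by omega)
      have h4 : b * (v + r + j * d) = b * v + b * r + b * (j * d) := by ring
      omega
    · have h1 : (j - q) * d + q * d = j * d := by
        have h0 : ((j - q) + q) * d = j * d := by rw [Nat.sub_add_cancel hj]
        have h2 : ((j - q) + q) * d = (j - q) * d + q * d := by ring
        omega
      have harg : v + r + j * d = v + (j - q) * d + a := by omega
      rw [harg, Nat.add_mod_right]
      have hcj : c * (j - q) + c * q = c * j := by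
        have h0 : c * ((j - q) + q) = c * j := by rw [Nat.sub_add_cancel hj]
        have h2 : c * ((j - q) + q) = c * (j - q) + c * q := by ring
        omega
      have h5 := hub_g v (j - q) hv1 (by omega)
      omega
  have hL4 : ∀ x, d ≤ x → x < a → ∃ y, y < d ∧ m x ≤ m y + c * q := by
    intro x hdx hxa
    obtain ⟨D, M, hD, hM⟩ : ∃ D M, D = (a - x - 1) / d ∧ M = (a - x - 1) % d := ⟨_, _, rfl, rfl⟩
    have hDd : d * D + M = a - x - 1 := by rw [hD, hM]; exact Nat.div_add_mod (a - x - 1) d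
    have hMd : M < d := by rw [hM]; exact Nat.mod_lt _ hd0
    have hdD : d * D = D * d := Nat.mul_comm _ _
    have hDq : D < q := by
      rw [hD]
      exact (Nat.div_lt_iff_lt_mul hd0).mpr (by omega)
    have hTd : (D + 1) * d = D * d + d := by ring
    have hxTd : a ≤ x + (D + 1) * d := by omega
    refine ⟨x + (D + 1) * d - a, by omega, ?_⟩
    have hcT : c * (D + 1) ≤ c * q := Nat.mul_le_mul_left c (by omega)
    have h6 : m x ≤ m (x + (D + 1) * d - a) + c * (D + 1) := by
      apply hub x _ (D + 1) (by omega) (by omega)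
      apply hcong_key _ _ _ D
      have h7 : ℓ * (D + 1) + d * (D + 1) = a * (D + 1) := by
        calc ℓ * (D + 1) + d * (D + 1) = (ℓ + d) * (D + 1) := by ring
          _ = a * (D + 1) := by rw [hda]
      have h8 : a * (D + 1) = a * D + a := by ring
      have h9 : d * (D + 1) = d * D + d := by ring
      omega
    omega
  -- reduction to residues below r
  have hlow : ∀ v, v < d → m v ≤ m (v % r) + c * q * (v / r) := by
    intro v
    induction v using Nat.strong_induction_on with
    | _ v ih =>
      intro hvd
      rcases Nat.lt_or_ge v r with h | h
      · rw [Nat.mod_eq_of_lt h, Nat.div_eq_of_lt h]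
        simp
      · have h1 := hL3 v h hvd
        have h2 := ih (v - r) (by omega) (by omega)
        have h3 : v - r + r = v := by omega
        have h4 : (v - r) % r = v % r := by
          conv_rhs => rw [← h3]
          rw [Nat.add_mod_right]
        have h5 : (v - r) / r + 1 = v / r := by
          conv_rhs => rw [← h3]
          rw [Nat.add_div_right _ hr0]
        rw [h4] at h2
        have h6 : c * q * ((v - r) / r) + c * q = c * q * ((v - r) / r + 1) := by ring
        have h7 : c * q * ((v - r) / r + 1) = c * q * (v / r) := by rw [h5]
        omega
  have hit : ∀ j x₀, x₀ + j * r < d → m x₀ + c * q * j ≤ m (x₀ + j * r) := by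
    intro j
    induction j with
    | zero => intro x₀ h; simp
    | succ j ih =>
      intro x₀ h
      have hj1 : x₀ + j * r + r = x₀ + (j + 1) * r := by ring
      have h2 : x₀ + j * r < d := by omega
      have h3 := ih x₀ h2
      have h4 := hL2 (x₀ + j * r) (by omega)
      rw [hj1] at h4
      have h5 : c * q * j + c * q = c * q * (j + 1) := by ring
      omega
  set A := Finset.sup (Finset.range u) (fun x => m x + c * q) with hA
  set B := Finset.sup (Finset.Ico u r) m with hB
  have hred : ∀ y, y < d → m y + c * q ≤ max A B + c * q * p := by
    intro y hyd
    have h1 := hlow y hyd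
    have hyr : y % r < r := Nat.mod_lt y hr0
    have hdm := Nat.div_add_mod y r
    rcases Nat.lt_or_ge (y % r) u with h | h
    · have hdiv : y / r ≤ p := by
        by_contra hcon
        push_neg at hcon
        have h2 : r * (p + 1) ≤ r * (y / r) := Nat.mul_le_mul_left r hcon
        have h3 : r * (p + 1) = r * p + r := by ring
        omega
      have h4 : m (y % r) + c * q ≤ A := by
        rw [hA]
        exact Finset.le_sup (f := fun x => m x + c * q) (Finset.mem_range.mpr h)
      have h5 : c * q * (y / r) ≤ c * q * p := Nat.mul_le_mul_left _ hdiv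
      have h6 : A ≤ max A B := le_max_left A B
      omega
    · have hdiv : y / r + 1 ≤ p := by
        by_contra hcon
        push_neg at hcon
        have h2 : r * p ≤ r * (y / r) := Nat.mul_le_mul_left r (by omega)
        omega
      have h4 : m (y % r) ≤ B := by
        rw [hB]
        exact Finset.le_sup (Finset.mem_Ico.mpr ⟨h, hyr⟩)
      have h5 : c * q * (y / r) + c * q = c * q * (y / r + 1) := by ring
      have h5' : c * q * (y / r + 1) ≤ c * q * p := Nat.mul_le_mul_left _ hdiv
      have h6 : B ≤ max A B := le_max_right A B
      omega
  rw [hgoalp]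
  apply le_antisymm
  · apply Finset.sup_le
    intro x hx
    have hxa : x < a := Finset.mem_range.mp hx
    rcases Nat.lt_or_ge x d with hxd | hxd
    · have h1 := hred x hxd
      omega
    · obtain ⟨y, hyd, hxy⟩ := hL4 x hxd hxa
      have h1 := hred y hyd
      omega
  · have hAle : A + c * q * p ≤ Finset.sup (Finset.range a) m := by
      obtain ⟨x₀, hx₀, hAeq⟩ := Finset.exists_mem_eq_sup (Finset.range u)
        ⟨0, Finset.mem_range.mpr (by omega)⟩ (fun x => m x + c * q)
      rw [hA, hAeq]
      have hx₀u : x₀ < u := Finset.mem_range.mp hx₀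
      have hpc : p * r = r * p := Nat.mul_comm _ _
      have hvd : x₀ + p * r < d := by omega
      have h1 := hit p x₀ hvd
      have h2 := hL1 (x₀ + p * r) (by omega) hvd
      have h3 : x₀ + p * r + r < a := by
        have h0 : d ≤ q * d := Nat.le_mul_of_pos_left d hq1
        omega
      have h4 : m (x₀ + p * r + r) ≤ Finset.sup (Finset.range a) m :=
        Finset.le_sup (Finset.mem_range.mpr h3)
      omega
    have hBle : B + c * q * p ≤ Finset.sup (Finset.range a) m := by
      obtain ⟨x₀, hx₀, hBeq⟩ := Finset.exists_mem_eq_sup (Finset.Ico u r)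
        ⟨u, Finset.mem_Ico.mpr ⟨le_refl u, hu_r⟩⟩ m
      rw [hB, hBeq]
      obtain ⟨hx₀u, hx₀r⟩ := Finset.mem_Ico.mp hx₀
      have hp1r : (p - 1) * r + r = p * r := by
        have h0 : ((p - 1) + 1) * r = p * r := by rw [Nat.sub_add_cancel hp1]
        have h2 : ((p - 1) + 1) * r = (p - 1) * r + r := by ring
        omega
      have hpc : p * r = r * p := Nat.mul_comm _ _
      have hvd : x₀ + (p - 1) * r < d := by omega
      have h1 := hit (p - 1) x₀ hvd
      have h2 := hL1 (x₀ + (p - 1) * r) (by omega) hvd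
      have h3 : x₀ + (p - 1) * r + r < a := by
        have h0 : d ≤ q * d := Nat.le_mul_of_pos_left d hq1
        omega
      have h4 : m (x₀ + (p - 1) * r + r) ≤ Finset.sup (Finset.range a) m :=
        Finset.le_sup (Finset.mem_range.mpr h3)
      have h5 : c * q * (p - 1) + c * q = c * q * p := by
        have h6 : c * q * ((p - 1) + 1) = c * q * p := by rw [Nat.sub_add_cancel hp1]
        have h7 : c * q * ((p - 1) + 1) = c * q * (p - 1) + c * q := by ring
        omega
      omega
    rcases max_choice A B with h | h <;> rw [h]
    · exact hAle
    · exact hBle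
end
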